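/- Let T be a labeled monomial tree. Then Δ(T) = 0 if and only if every non-root vertex label of T appears exactly twice and both occurrences lie in the same generation. In this case the edges of T are perfectly paired row by row (each edge is paired with the unique other edge carrying the same pair of endpoint labels, lying in the same generation), and each such pair consists of exactly one T₁ edge and one T₂ edge; that is, T admits a perfect row-wise Wick pairing. -/

import Mathlib

/-- A labeled monomial tree over labels `{1,…,N}` (encoded as `Fin N`): a finite rooted
tree of depth `t` whose vertices lie in levels `0,…,t` (root at level `t`, all leaves at
level `0`), each vertex carrying a label, subject to the non-backtracking condition and
the condition that every edge-label pair occurs on at least two edges. -/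
structure LabeledMonomialTree (N : ℕ) where
  depth : ℕ
  V : Type
  [instFintype : Fintype V]
  [instDecEq : DecidableEq V]
  root : V
  parent : V → V
  level : V → ℕ
  label : V → Fin N
  parent_root : parent root = root
  level_root : level root = depth
  level_le : ∀ v, level v ≤ depth
  level_parent : ∀ v, v ≠ root → level (parent v) = level v + 1
  leaves_at_zero : ∀ v, 1 ≤ level v → ∃ w, w ≠ root ∧ parent w = v
  nonbacktracking : ∀ w, w ≠ root → parent w ≠ root →
    label (parent (parent w)) ≠ label w
  edges_doubled : ∀ v, v ≠ root → ∃ w, w ≠ root ∧ w ≠ v ∧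
    s(label w, label (parent w)) = s(label v, label (parent v))

attribute [instance] LabeledMonomialTree.instFintype LabeledMonomialTree.instDecEq

namespace LabeledMonomialTree

variable {N : ℕ}

/-- The number of edges of `T` (each non-root vertex contributes the edge to its
parent). -/
def numEdges (T : LabeledMonomialTree N) : ℕ := Fintype.card {v : T.V // v ≠ T.root}

/-- The number of distinct vertex labels of `T`. -/
def numLabels (T : LabeledMonomialTree N) : ℕ := (Finset.univ.image T.label).card

/-- The excess `Δ(T) = |E(T)|/2 - |V(T)| + 1`, where `|V(T)|` is the number of distinct
vertex labels. -/
def excess (T : LabeledMonomialTree N) : ℚ :=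
  (T.numEdges : ℚ) / 2 - (T.numLabels : ℚ) + 1

/-- The unordered pair of endpoint labels of the edge from `v` to its parent. -/
def edgeSym (T : LabeledMonomialTree N) (v : T.V) : Sym2 (Fin N) :=
  s(T.label v, T.label (T.parent v))

/-- The number of vertices of `T` carrying the label `i`. -/
noncomputable def mult (T : LabeledMonomialTree N) (i : Fin N) : ℕ :=
  Set.ncard {v : T.V | T.label v = i}

end LabeledMonomialTree
namespace LabeledMonomialTree

variable {N : ℕ}

/-- A standard ordering of the edges of `T` (edges being identified with their child
vertices): an injective enumeration which lists edges generation by generation from the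
leaves up to the root (edges with child at a lower level come first), and within a
generation orders edges consistently with the order of their parent edges. -/
structure StdOrder (T : LabeledMonomialTree N) where
  ord : T.V → ℕ
  inj : Function.Injective ord
  level_mono : ∀ v w, v ≠ T.root → w ≠ T.root → T.level v < T.level w → ord v < ord w
  parent_mono : ∀ v w, v ≠ T.root → w ≠ T.root → T.level v = T.level w →
    ord v < ord w → ord (T.parent v) ≤ ord (T.parent w)

/-- A `T₁` edge: the first edge, in the standard ordering, whose child label is the
given one (the child label has not appeared previously). -/
def IsT1 (T : LabeledMonomialTree N) (O : StdOrder T) (v : T.V) : Prop :=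
  v ≠ T.root ∧ ∀ w, w ≠ T.root → O.ord w < O.ord v → T.label w ≠ T.label v

/-- A `T₂` edge: the second occurrence of an edge with a given pair of endpoint labels,
whose first occurrence was a `T₁` edge. -/
def IsT2 (T : LabeledMonomialTree N) (O : StdOrder T) (v : T.V) : Prop :=
  v ≠ T.root ∧ ∃ w, w ≠ T.root ∧ O.ord w < O.ord v ∧ T.edgeSym w = T.edgeSym v ∧
    T.IsT1 O w ∧
    ∀ u, u ≠ T.root → T.edgeSym u = T.edgeSym v → O.ord u < O.ord v → u = w

/-- A `T₃` edge: any edge which is neither `T₁` nor `T₂`. -/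
def IsT3 (T : LabeledMonomialTree N) (O : StdOrder T) (v : T.V) : Prop :=
  v ≠ T.root ∧ ¬ T.IsT1 O v ∧ ¬ T.IsT2 O v

end LabeledMonomialTree

/-!
Every pair of endpoint labels occurs on at least two edges, so `2 |S| ≤ |E(T)|` for the set `S`
of label pairs. Sending each label `j` other than the root's to `{j, π j}`, where `π j` labels the
parent of a highest vertex labelled `j`, is injective, so `|V(T)| - 1 ≤ |S|` and `Δ(T) ≥ 0`.
When `Δ(T) = 0` both bounds are sharp: every pair occurs exactly twice and is of the form
`{j, π j}`. Going down from the root, non-backtracking then forces the parent of every vertex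
labelled `j` to be labelled `π j`. Hence the label of a vertex determines its generation, its
label class is exactly the pair of edges sharing its endpoint labels, and of these two edges the
earlier in a standard ordering is `T₁`, the later `T₂`.
-/

open Finset

namespace LabeledMonomialTree

variable {N : ℕ} (T : LabeledMonomialTree N)

lemma level_lt_depth {v : T.V} (hv : v ≠ T.root) : T.level v < T.depth := by
  have := T.level_parent v hv
  have := T.level_le (T.parent v)
  omega

def nonRoot : Finset T.V := {v | v ≠ T.root}

@[simp] lemma mem_nonRoot {v : T.V} : v ∈ T.nonRoot ↔ v ≠ T.root := by simp [nonRoot]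

lemma numEdges_eq_card_nonRoot : T.numEdges = #T.nonRoot := Fintype.card_subtype _

def edgeSyms : Finset (Sym2 (Fin N)) := T.nonRoot.image T.edgeSym

def edgeFiber (s : Sym2 (Fin N)) : Finset T.V := {w ∈ T.nonRoot | T.edgeSym w = s}

@[simp] lemma mem_edgeFiber {s : Sym2 (Fin N)} {w : T.V} :
    w ∈ T.edgeFiber s ↔ w ≠ T.root ∧ T.edgeSym w = s := by
  simp [edgeFiber]

def innerLabels : Finset (Fin N) := (T.nonRoot.image T.label).erase (T.label T.root)

lemma mem_innerLabels {j : Fin N} :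
    j ∈ T.innerLabels ↔ j ≠ T.label T.root ∧ ∃ v, v ≠ T.root ∧ T.label v = j := by
  simp [innerLabels]

lemma numLabels_eq_card_innerLabels_add_one : T.numLabels = #T.innerLabels + 1 := by
  have : univ.image T.label = insert (T.label T.root) T.innerLabels := by
    ext j
    simp only [mem_image, mem_univ, true_and, mem_insert, mem_innerLabels]
    constructor
    · rintro ⟨v, rfl⟩
      by_cases hv : v = T.root
      · exact .inl (congrArg T.label hv)
      · exact or_iff_not_imp_left.2 fun hj => ⟨hj, v, hv, rfl⟩
    · rintro (rfl | ⟨-, v, -, rfl⟩) <;> exact ⟨_, rfl⟩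
  rw [numLabels, this, card_insert_of_notMem (by simp [innerLabels])]

lemma excess_eq_zero_iff : T.excess = 0 ↔ T.numEdges = 2 * #T.innerLabels := by
  rw [excess, numLabels_eq_card_innerLabels_add_one]
  constructor
  · intro h
    exact_mod_cast (by push_cast at h; linarith : (T.numEdges : ℚ) = 2 * #T.innerLabels)
  · intro h
    rw [h]
    push_cast
    ring

lemma two_le_card_edgeFiber {v : T.V} (hv : v ≠ T.root) : 2 ≤ #(T.edgeFiber (T.edgeSym v)) := by
  obtain ⟨w, hw, hwv, hsym⟩ := T.edges_doubled v hv
  exact one_lt_card.2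
    ⟨w, T.mem_edgeFiber.2 ⟨hw, hsym⟩, v, T.mem_edgeFiber.2 ⟨hv, rfl⟩, hwv⟩

lemma two_mul_card_edgeSyms_le : 2 * #T.edgeSyms ≤ T.numEdges := by
  rw [numEdges_eq_card_nonRoot]
  refine mul_card_image_le_card _ 2 fun s hs => ?_
  obtain ⟨v, hv, rfl⟩ := mem_image.1 hs
  exact T.two_le_card_edgeFiber (T.mem_nonRoot.1 hv)

lemma exists_highest {j : Fin N} (h : ∃ v, v ≠ T.root ∧ T.label v = j) :
    ∃ v, (v ≠ T.root ∧ T.label v = j) ∧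
      ∀ u, u ≠ T.root → T.label u = j → T.level u ≤ T.level v := by
  obtain ⟨v, hv, hmax⟩ :=
    exists_max_image {v | v ≠ T.root ∧ T.label v = j} T.level
      (h.imp fun v hv => by simpa using hv)
  exact ⟨v, by simpa using hv, fun u hu hl => hmax u (by simp [hu, hl])⟩

/-- Take `π j` to be the label of the parent of a highest vertex labelled `j`. Unless `π j` is
the root label, that vertex lies strictly below the highest vertex labelled `π j`; so
`{j, π j} = {k, π k}` with `j ≠ k` would put each of `j`, `k` strictly below the other. -/
lemma exists_injOn_edgeSyms : ∃ π : Fin N → Fin N,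
    Set.MapsTo (fun j => s(j, π j)) T.innerLabels T.edgeSyms ∧
      Set.InjOn (fun j => s(j, π j)) T.innerLabels := by
  have : Nonempty T.V := ⟨T.root⟩
  choose! f hf hmax using fun j (hj : j ∈ T.innerLabels) =>
    T.exists_highest (T.mem_innerLabels.1 hj).2
  have edgeSym_f : ∀ j ∈ T.innerLabels, T.edgeSym (f j) = s(j, T.label (T.parent (f j))) :=
    fun j hj => by rw [edgeSym, (hf j hj).2]
  have level_lt : ∀ j ∈ T.innerLabels, T.label (T.parent (f j)) ≠ T.label T.root →
      T.level (f j) < T.level (f (T.label (T.parent (f j)))) := by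
    intro j hj hne
    have hp : T.parent (f j) ≠ T.root := fun hp => hne (by rw [hp])
    have hmem : T.label (T.parent (f j)) ∈ T.innerLabels :=
      T.mem_innerLabels.2 ⟨hne, _, hp, rfl⟩
    have := hmax _ hmem _ hp rfl
    have := T.level_parent _ (hf j hj).1
    omega
  refine ⟨fun j => T.label (T.parent (f j)), fun j hj => ?_, fun j hj k hk hjk => ?_⟩
  · show s(j, _) ∈ T.edgeSyms
    rw [← edgeSym_f j hj]
    exact mem_image_of_mem _ (by simpa using (hf j hj).1)
  · dsimp only at hjk
    rcases Sym2.eq_iff.1 hjk with ⟨rfl, -⟩ | ⟨hj', hk'⟩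
    · rfl
    · have h1 := level_lt j hj (hk' ▸ (T.mem_innerLabels.1 hk).1)
      have h2 := level_lt k hk (hj' ▸ (T.mem_innerLabels.1 hj).1)
      rw [hk'] at h1
      rw [← hj'] at h2
      omega

lemma card_innerLabels_le_card_edgeSyms : #T.innerLabels ≤ #T.edgeSyms := by
  obtain ⟨π, hmaps, hinj⟩ := T.exists_injOn_edgeSyms
  exact card_le_card_of_injOn _ hmaps hinj

lemma exists_edgeSym_eq_of_excess_eq_zero (h : T.excess = 0) : ∃ π : Fin N → Fin N,
    ∀ v, v ≠ T.root → ∃ j, j ≠ T.label T.root ∧ T.edgeSym v = s(j, π j) := by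
  obtain ⟨π, hmaps, hinj⟩ := T.exists_injOn_edgeSyms
  have hcard : #T.edgeSyms ≤ #T.innerLabels := by
    have := T.two_mul_card_edgeSyms_le
    rw [T.excess_eq_zero_iff.1 h] at this
    omega
  refine ⟨π, fun v hv => ?_⟩
  obtain ⟨j, hj, hjv⟩ :=
    surjOn_of_injOn_of_card_le _ hmaps hinj hcard (mem_image_of_mem T.edgeSym (by simpa using hv))
  exact ⟨j, (T.mem_innerLabels.1 hj).1, hjv.symm⟩

lemma numEdges_eq_two_mul_card_edgeSyms_of_excess_eq_zero (h : T.excess = 0) :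
    T.numEdges = 2 * #T.edgeSyms := by
  have := T.two_mul_card_edgeSyms_le
  have := T.card_innerLabels_le_card_edgeSyms
  rw [T.excess_eq_zero_iff.1 h] at *
  omega

lemma card_edgeFiber_eq_two (h : T.excess = 0) {v : T.V} (hv : v ≠ T.root) :
    #(T.edgeFiber (T.edgeSym v)) = 2 := by
  have hle : ∀ s ∈ T.edgeSyms, 2 ≤ #(T.edgeFiber s) := by
    intro s hs
    obtain ⟨u, hu, rfl⟩ := mem_image.1 hs
    exact T.two_le_card_edgeFiber (T.mem_nonRoot.1 hu)
  have hsum : ∑ _s ∈ T.edgeSyms, 2 = ∑ s ∈ T.edgeSyms, #(T.edgeFiber s) := by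
    rw [sum_const, smul_eq_mul, mul_comm,
      ← T.numEdges_eq_two_mul_card_edgeSyms_of_excess_eq_zero h, numEdges_eq_card_nonRoot]
    exact card_eq_sum_card_image _ _
  exact ((sum_eq_sum_iff_of_le hle).1 hsum _ (mem_image_of_mem _ (by simpa using hv))).symm

/-- `T` maps onto a tree of labels, rooted at the root label, whose parent map is `π`. -/
def IsParentLabelMap (π : Fin N → Fin N) : Prop :=
  ∀ v, v ≠ T.root → T.label v ≠ T.label T.root ∧ T.label (T.parent v) = π (T.label v)

/-- Induction from the root down: if the edge above `v` ran from `π j` down to `j`, then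
`v`'s parent would be labelled `j` and its grandparent `π j`, which backtracks. -/
theorem isParentLabelMap_of_forall_edgeSym {π : Fin N → Fin N}
    (h : ∀ v, v ≠ T.root → ∃ j, j ≠ T.label T.root ∧ T.edgeSym v = s(j, π j))
    (v : T.V) (hv : v ≠ T.root) :
    T.label v ≠ T.label T.root ∧ T.label (T.parent v) = π (T.label v) := by
  obtain ⟨j, hj, hvj⟩ := h v hv
  rcases Sym2.eq_iff.1 hvj with ⟨rfl, hpj⟩ | ⟨hvπ, hpj⟩
  · exact ⟨hj, hpj⟩
  · have hp : T.parent v ≠ T.root := fun hp => hj (by rw [← hpj, hp])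
    have ih := isParentLabelMap_of_forall_edgeSym h (T.parent v) hp
    exact absurd (by rw [ih.2, hpj, hvπ]) (T.nonbacktracking v hv hp)
termination_by T.depth - T.level v
decreasing_by
  have := T.level_parent v hv
  have := T.level_le (T.parent v)
  omega

lemma exists_isParentLabelMap_of_excess_eq_zero (h : T.excess = 0) :
    ∃ π, T.IsParentLabelMap π := by
  obtain ⟨π, hπ⟩ := T.exists_edgeSym_eq_of_excess_eq_zero h
  exact ⟨π, T.isParentLabelMap_of_forall_edgeSym hπ⟩

section IsParentLabelMap

variable {T} {π : Fin N → Fin N}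

lemma IsParentLabelMap.eq_root_iff (hπ : T.IsParentLabelMap π) {u : T.V} :
    u = T.root ↔ T.label u = T.label T.root :=
  ⟨fun hu => by rw [hu], fun hu => by_contra fun hne => (hπ u hne).1 hu⟩

lemma IsParentLabelMap.ne_root_of_label_eq (hπ : T.IsParentLabelMap π) {v w : T.V}
    (hv : v ≠ T.root) (hwv : T.label w = T.label v) : w ≠ T.root :=
  fun hw => (hπ v hv).1 (by rw [← hwv, hw])

lemma IsParentLabelMap.edgeSym_eq (hπ : T.IsParentLabelMap π) {v : T.V} (hv : v ≠ T.root) :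
    T.edgeSym v = s(T.label v, π (T.label v)) := by
  rw [edgeSym, (hπ v hv).2]

theorem IsParentLabelMap.level_eq_of_label_eq (hπ : T.IsParentLabelMap π) {v w : T.V}
    (hv : v ≠ T.root) (hw : w ≠ T.root) (hvw : T.label v = T.label w) :
    T.level v = T.level w := by
  have hpar : T.label (T.parent v) = T.label (T.parent w) := by
    rw [(hπ v hv).2, (hπ w hw).2, hvw]
  have hv' := T.level_parent v hv
  have hw' := T.level_parent w hw
  by_cases hp : T.parent v = T.root
  · have hp' : T.parent w = T.root := hπ.eq_root_iff.2 (by rw [← hpar, hp])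
    rw [hp, T.level_root] at hv'
    rw [hp', T.level_root] at hw'
    omega
  · have hp' : T.parent w ≠ T.root := fun hp' => hp (hπ.eq_root_iff.2 (by rw [hpar, hp']))
    have := IsParentLabelMap.level_eq_of_label_eq hπ hp hp' hpar
    omega
termination_by T.depth - T.level v
decreasing_by
  have := T.level_le (T.parent v)
  omega

lemma IsParentLabelMap.label_eq_of_edgeSym_eq (hπ : T.IsParentLabelMap π) {v w : T.V}
    (hv : v ≠ T.root) (hw : w ≠ T.root) (hvw : T.edgeSym v = T.edgeSym w) :
    T.label v = T.label w := by
  rcases Sym2.eq_iff.1 hvw with ⟨h, -⟩ | ⟨h₁, h₂⟩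
  · exact h
  · have hpv : T.parent v ≠ T.root := fun hp => (hπ w hw).1 (by rw [← h₂, hp])
    have hpw : T.parent w ≠ T.root := fun hp => (hπ v hv).1 (by rw [h₁, hp])
    have := hπ.level_eq_of_label_eq hv hpw h₁
    have := hπ.level_eq_of_label_eq hpv hw h₂
    have := T.level_parent v hv
    have := T.level_parent w hw
    omega

lemma IsParentLabelMap.coe_edgeFiber (hπ : T.IsParentLabelMap π) {v : T.V} (hv : v ≠ T.root) :
    (T.edgeFiber (T.edgeSym v) : Set T.V) = {w | T.label w = T.label v} := by
  ext w
  rw [mem_coe, mem_edgeFiber, Set.mem_ofPred_eq]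
  refine ⟨fun ⟨hw, hsym⟩ => hπ.label_eq_of_edgeSym_eq hw hv hsym, fun hwv => ?_⟩
  have hw := hπ.ne_root_of_label_eq hv hwv
  exact ⟨hw, by rw [hπ.edgeSym_eq hw, hπ.edgeSym_eq hv, hwv]⟩

lemma IsParentLabelMap.isT1_and_isT2 (hπ : T.IsParentLabelMap π) (O : T.StdOrder) {a b : T.V}
    (hab : T.edgeFiber (T.edgeSym a) = {a, b}) (hlt : O.ord a < O.ord b) :
    T.IsT1 O a ∧ T.IsT2 O b := by
  have hmem : ∀ u, u ≠ T.root ∧ T.edgeSym u = T.edgeSym a ↔ u = a ∨ u = b := fun u => by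
    rw [← mem_edgeFiber, hab, mem_insert, mem_singleton]
  obtain ⟨ha, -⟩ := (hmem a).2 (.inl rfl)
  obtain ⟨hb, hba⟩ := (hmem b).2 (.inr rfl)
  have hT1 : T.IsT1 O a := by
    refine ⟨ha, fun u hu hua hlabel => ?_⟩
    rcases (hmem u).1 ⟨hu, by rw [hπ.edgeSym_eq hu, hπ.edgeSym_eq ha, hlabel]⟩ with rfl | rfl
    · exact lt_irrefl _ hua
    · exact lt_irrefl _ (hua.trans hlt)
  refine ⟨hT1, hb, a, ha, hlt, hba.symm, hT1, fun u hu hub hult => ?_⟩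
  rcases (hmem u).1 ⟨hu, hub.trans hba⟩ with rfl | rfl
  · rfl
  · exact absurd hult (lt_irrefl _)

end IsParentLabelMap

theorem existsUnique_wick_partner (h : T.excess = 0) (O : T.StdOrder) {v : T.V}
    (hv : v ≠ T.root) :
    ∃! w, w ≠ T.root ∧ w ≠ v ∧ T.edgeSym w = T.edgeSym v ∧ T.level w = T.level v ∧
      ((T.IsT1 O v ∧ T.IsT2 O w) ∨ (T.IsT2 O v ∧ T.IsT1 O w)) := by
  obtain ⟨π, hπ⟩ := T.exists_isParentLabelMap_of_excess_eq_zero h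
  have hvF : v ∈ T.edgeFiber (T.edgeSym v) := T.mem_edgeFiber.2 ⟨hv, rfl⟩
  obtain ⟨w, hw⟩ := card_eq_one.1 (by rw [card_erase_of_mem hvF, T.card_edgeFiber_eq_two h hv] :
    #((T.edgeFiber (T.edgeSym v)).erase v) = 1)
  have hF : T.edgeFiber (T.edgeSym v) = {v, w} := by rw [← insert_erase hvF, hw]
  obtain ⟨hwv, hwF⟩ := mem_erase.1 (hw ▸ mem_singleton_self w)
  obtain ⟨hwr, hsym⟩ := T.mem_edgeFiber.1 hwF
  refine ⟨w, ⟨hwr, hwv, hsym, ?_, ?_⟩, ?_⟩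
  · exact hπ.level_eq_of_label_eq hwr hv (hπ.label_eq_of_edgeSym_eq hwr hv hsym)
  · rcases (O.inj.ne hwv).lt_or_gt with hlt | hlt
    · exact .inr (hπ.isT1_and_isT2 O (by rw [hsym, hF, pair_comm]) hlt).symm
    · exact .inl (hπ.isT1_and_isT2 O hF hlt)
  · rintro u ⟨hu, huv, husym, -⟩
    have : u ∈ (T.edgeFiber (T.edgeSym v)).erase v :=
      mem_erase.2 ⟨huv, T.mem_edgeFiber.2 ⟨hu, husym⟩⟩
    rwa [hw, mem_singleton] at this

lemma excess_eq_zero_of_forall_labelClass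
    (H : ∀ v, v ≠ T.root → Set.ncard {w | T.label w = T.label v} = 2 ∧
      ∀ w, T.label w = T.label v → T.level w = T.level v) : T.excess = 0 := by
  have hroot : ∀ v, v ≠ T.root → T.label v ≠ T.label T.root := fun v hv hr => by
    have := (H v hv).2 T.root hr.symm
    rw [T.level_root] at this
    exact (T.level_lt_depth hv).ne this.symm
  have hinner : T.innerLabels = T.nonRoot.image T.label :=
    erase_eq_of_notMem (by simpa using hroot)
  rw [excess_eq_zero_iff, hinner, numEdges_eq_card_nonRoot, card_eq_sum_card_image T.label,
    mul_comm, ← smul_eq_mul, ← sum_const]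
  refine sum_congr rfl fun j hj => ?_
  obtain ⟨v, hv, rfl⟩ := mem_image.1 hj
  rw [← (H v (T.mem_nonRoot.1 hv)).1, ← Set.ncard_coe_finset]
  congr
  ext w
  simp only [coe_filter, mem_nonRoot, ne_eq, Set.mem_ofPred_eq, and_iff_right_iff_imp]
  rintro hwv rfl
  exact hroot v (T.mem_nonRoot.1 hv) hwv.symm

end LabeledMonomialTree

/-- **Excess zero is equivalent to a perfect row-wise Wick pairing.**
For a labeled monomial tree `T`: `Δ(T) = 0` if and only if every non-root vertex label
appears exactly twice, with both occurrences in the same generation.  In this case the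
edges of `T` are perfectly paired row by row: each edge has a unique partner carrying
the same pair of endpoint labels and lying in the same generation, and (for any standard
ordering) each such pair consists of exactly one `T₁` edge and one `T₂` edge. -/
theorem excess_eq_zero_iff_perfect_wick_pairing {N : ℕ} (T : LabeledMonomialTree N)
    (O : T.StdOrder) :
    (T.excess = 0 ↔ ∀ v, v ≠ T.root →
      Set.ncard {w : T.V | T.label w = T.label v} = 2 ∧
      ∀ w, T.label w = T.label v → T.level w = T.level v) ∧
    (T.excess = 0 → ∀ v, v ≠ T.root → ∃! w, w ≠ T.root ∧ w ≠ v ∧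
      T.edgeSym w = T.edgeSym v ∧ T.level w = T.level v ∧
      ((T.IsT1 O v ∧ T.IsT2 O w) ∨ (T.IsT2 O v ∧ T.IsT1 O w))) := by
  refine ⟨⟨fun h v hv => ?_, T.excess_eq_zero_of_forall_labelClass⟩,
    fun h v hv => T.existsUnique_wick_partner h O hv⟩
  obtain ⟨π, hπ⟩ := T.exists_isParentLabelMap_of_excess_eq_zero h
  rw [← hπ.coe_edgeFiber hv, Set.ncard_coe_finset, T.card_edgeFiber_eq_two h hv]
  exact ⟨rfl, fun w hwv => hπ.level_eq_of_label_eq (hπ.ne_root_of_label_eq hv hwv) hv hwv⟩
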